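/- Power variant of Proposition 3.1: Let ξ, η be random variables on a probability space, α ∈ (0,∞), D a non-empty subset of [1,∞)×[1,∞), and v₁(p,r) a non-negative function such that |ξ|_p ≤ v₁(p,r) · |η|_r^α for all (p,r) ∈ D. Let β : (a,b) → (0,∞) satisfy B := sup_{r ∈ (a,b)} |η|_r/β(r) < ∞, and assume R(p) ∩ (a,b) ≠ ∅ for each p ∈ U. Define τ(p) := inf_{r ∈ R(p) ∩ (a,b)} [ v₁(p,r) · β(r)^α ]. Then |ξ|_p ≤ τ(p) · B^α for every p ∈ U, i.e. ||ξ||Gτ ≤ (||η||Gβ)^α. -/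
import Mathlib


open MeasureTheory ENNReal

/-- The Lebesgue–Riesz norm `|f|_p = (E |f|^p)^(1/p)` of a random variable `f`
on a probability space, with values in `ℝ≥0∞`. -/
noncomputable def Lnorm {Ω : Type*} [MeasurableSpace Ω] (μ : Measure Ω)
    (f : Ω → ℝ) (p : ℝ) : ℝ≥0∞ :=
  (∫⁻ ω, ENNReal.ofReal (|f ω| ^ p) ∂μ) ^ (1 / p)

/-- power variant of Proposition 3.1: suppose
`|ξ|_p ≤ v₁(p,r) |η|_r^α` for all `(p,r) ∈ D`, with `α ∈ (0,∞)`; let `β` be a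
generating function on `(a,b)`, positive and finite there, with
`B = sup_{r ∈ (a,b)} |η|_r / β(r) < ∞`, and assume `R(p) ∩ (a,b) ≠ ∅` for each
`p ∈ U`. With `τ(p) = inf_{r ∈ R(p) ∩ (a,b)} v₁(p,r) β(r)^α`, one has
`|ξ|_p ≤ τ(p) B^α` for every `p ∈ U`, i.e. `‖ξ‖Gτ ≤ (‖η‖Gβ)^α`. -/
theorem tail_moment_prop_3_1_power
    {Ω : Type*} [MeasurableSpace Ω] (μ : Measure Ω) [IsProbabilityMeasure μ]
    (ξ η : Ω → ℝ) (α : ℝ) (hα : 0 < α)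
    (D : Set (ℝ × ℝ)) (hDne : D.Nonempty)
    (hD : D ⊆ Set.Ici (1 : ℝ) ×ˢ Set.Ici (1 : ℝ))
    (v₁ : ℝ → ℝ → ℝ≥0∞)
    (hkey : ∀ p r : ℝ, (p, r) ∈ D → Lnorm μ ξ p ≤ v₁ p r * Lnorm μ η r ^ α)
    (a b : ℝ) (β : ℝ → ℝ≥0∞)
    (hβ : ∀ r ∈ Set.Ioo a b, 0 < β r ∧ β r < ⊤)
    (B : ℝ≥0∞) (hBdef : B = ⨆ r ∈ Set.Ioo a b, Lnorm μ η r / β r) (hB : B < ⊤)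
    (hR : ∀ p ∈ {p : ℝ | ∃ r : ℝ, (p, r) ∈ D},
      ({r : ℝ | (p, r) ∈ D} ∩ Set.Ioo a b).Nonempty)
    (τ : ℝ → ℝ≥0∞)
    (hτ : ∀ p : ℝ,
      τ p = ⨅ r ∈ {r : ℝ | (p, r) ∈ D} ∩ Set.Ioo a b, v₁ p r * β r ^ α)
    (p : ℝ) (hp : p ∈ {p : ℝ | ∃ r : ℝ, (p, r) ∈ D}) :
    Lnorm μ ξ p ≤ τ p * B ^ α := by
  have hne : Nonempty ({r : ℝ | (p, r) ∈ D} ∩ Set.Ioo a b : Set ℝ) :=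
    (hR p hp).to_subtype
  have hBt : B ^ α ≠ ⊤ := (ENNReal.rpow_lt_top_of_nonneg hα.le hB.ne).ne
  rw [hτ p, ← iInf_subtype'', ENNReal.iInf_mul (fun h _ => absurd h hBt)]
  refine le_iInf fun x => ?_
  obtain ⟨r, hrD, hrab⟩ := x
  obtain ⟨hβ0, hβtop⟩ := hβ r hrab
  have hηB : Lnorm μ η r ≤ β r * B := by
    have h1 : Lnorm μ η r / β r ≤ B := by
      rw [hBdef]
      exact le_biSup (fun r => Lnorm μ η r / β r) hrab
    rw [ENNReal.div_le_iff hβ0.ne' hβtop.ne] at h1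
    exact h1.trans_eq (mul_comm _ _)
  calc Lnorm μ ξ p ≤ v₁ p r * Lnorm μ η r ^ α := hkey p r hrD
    _ ≤ v₁ p r * (β r * B) ^ α :=
        mul_le_mul_right (ENNReal.rpow_le_rpow hηB hα.le) _
    _ = v₁ p r * β r ^ α * B ^ α := by
        rw [ENNReal.mul_rpow_of_nonneg _ _ hα.le, mul_assoc]
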